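/- Consistency check soundness for degree-reduction gates: let q be a polynomial over field F, σ an assignment, and p a univariate polynomial of degree at most 2 claimed to equal the partial evaluation of q leaving x free (i.e., claimed p(t) = q(σ[x↦t]) for all t). If the checked consistency condition σ(x)·p(1) + (1−σ(x))·p(0) = (δ_x q)(σ) fails whenever p is the true polynomial t ↦ q(σ[x↦t]) and (δ_x q)(σ) ≠ k, then: if (δ_x q)(σ) ≠ k but the supplied p satisfies σ(x)·p(1)+(1−σ(x))·p(0) = k, then p differs as a polynomial from t ↦ q(σ[x↦t]), and hence for r uniform in F, p(r) = q(σ[x↦r]) holds with probability at most 2/|F|. -/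
import Mathlib


/-- Partial evaluation `p|_{x:=a}`. -/
noncomputable def pev {V F : Type} [CommRing F] [DecidableEq V]
    (x : V) (a : F) (p : MvPolynomial V F) : MvPolynomial V F :=
  MvPolynomial.aeval (fun y => if y = x then MvPolynomial.C a else MvPolynomial.X y) p

/-- Degree reduction `δ_x p := x·(p|_{x:=1}) + (1-x)·(p|_{x:=0})`. -/
noncomputable def dred {V F : Type} [CommRing F] [DecidableEq V]
    (x : V) (p : MvPolynomial V F) : MvPolynomial V F :=
  MvPolynomial.X x * pev x 1 p + (1 - MvPolynomial.X x) * pev x 0 p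

/-- The true univariate polynomial `t ↦ q(σ[x↦t])`: substitute `σ(y)` for every
variable `y ≠ x` and keep `x` as the (univariate) indeterminate. -/
noncomputable def uniAt {V F : Type} [CommRing F] [DecidableEq V]
    (x : V) (σ : V → F) (q : MvPolynomial V F) : Polynomial F :=
  MvPolynomial.eval₂ Polynomial.C
    (fun y => if y = x then Polynomial.X else Polynomial.C (σ y)) q

lemma uniAt_eval {V F : Type} [CommRing F] [DecidableEq V]
    (x : V) (σ : V → F) (q : MvPolynomial V F) (a : F) :
    (uniAt x σ q).eval a = MvPolynomial.eval (Function.update σ x a) q := by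
  have h := MvPolynomial.eval₂_comp_left (Polynomial.evalRingHom a)
    (Polynomial.C : F →+* Polynomial F)
    (fun y => if y = x then Polynomial.X else Polynomial.C (σ y)) q
  simp only [uniAt, Polynomial.coe_evalRingHom] at h ⊢
  rw [h]
  rw [show ((Polynomial.evalRingHom a).comp Polynomial.C) = RingHom.id F from by
    ext c; simp]
  rw [MvPolynomial.eval₂_id]
  have hg : (Polynomial.eval a ∘ fun y => if y = x then Polynomial.X else Polynomial.C (σ y))
      = Function.update σ x a := by
    funext y; by_cases hy : y = x <;> simp [hy, Function.update_apply]
  rw [hg]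

lemma pev_eval {V F : Type} [CommRing F] [DecidableEq V]
    (x : V) (σ : V → F) (q : MvPolynomial V F) (a : F) :
    MvPolynomial.eval σ (pev x a q) = MvPolynomial.eval (Function.update σ x a) q := by
  have h := MvPolynomial.eval₂_comp_left (MvPolynomial.eval σ)
    (MvPolynomial.C : F →+* MvPolynomial V F)
    (fun y => if y = x then MvPolynomial.C a else MvPolynomial.X y) q
  simp only [pev, MvPolynomial.aeval_def, MvPolynomial.algebraMap_eq] at *
  rw [h]
  rw [show ((MvPolynomial.eval σ).comp (MvPolynomial.C : F →+* MvPolynomial V F)) = RingHom.id F from by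
    ext c; simp]
  rw [MvPolynomial.eval₂_id]
  have hg : (⇑(MvPolynomial.eval σ) ∘ fun y => if y = x then MvPolynomial.C a else MvPolynomial.X y)
      = Function.update σ x a := by
    funext y; by_cases hy : y = x <;> simp [hy, Function.update_apply]
  rw [hg]

lemma uniAt_natDegree {V F : Type} [CommRing F] [DecidableEq V]
    (x : V) (σ : V → F) (q : MvPolynomial V F) :
    (uniAt x σ q).natDegree ≤ MvPolynomial.degreeOf x q := by
  unfold uniAt
  rw [MvPolynomial.eval₂_eq]
  apply Polynomial.natDegree_sum_le_of_forall_le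
  intro d hd
  have hdx : d x ≤ MvPolynomial.degreeOf x q := by
    rw [MvPolynomial.degreeOf_eq_sup]
    exact Finset.le_sup (f := fun m => m x) hd
  refine le_trans (le_trans (Polynomial.natDegree_mul_le) ?_) hdx
  simp only [Polynomial.natDegree_C, zero_add]
  refine le_trans (Polynomial.natDegree_prod_le _ _) ?_
  calc ∑ i ∈ d.support, (Polynomial.natDegree
        ((if i = x then Polynomial.X else Polynomial.C (σ i)) ^ d i))
      ≤ ∑ i ∈ d.support, (if i = x then d i else 0) := by
        apply Finset.sum_le_sum
        intro i _
        by_cases hi : i = x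
        · subst hi; simp only [if_pos rfl]
          exact Polynomial.natDegree_X_pow_le _
        · simp only [if_neg hi, ← Polynomial.C_pow]
          exact le_of_eq (Polynomial.natDegree_C _)
    _ ≤ d x := by
        rw [Finset.sum_ite_eq' d.support x (fun i => d i)]
        split <;> simp


/-- soundness of the consistency check for degree-reduction
gates: if `(δ_x q)(σ) ≠ k` but the supplied degree-≤2 polynomial `p` passes the
check `σ(x)·p(1) + (1−σ(x))·p(0) = k`, then `p` differs as a polynomial from
the true polynomial `t ↦ q(σ[x↦t])`, and hence `p` agrees with it on at most 2
points of `F` (so a random `r` exposes the lie except with probability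
`2/|F|`). -/
theorem stmt16 {V F : Type} [Field F] [Fintype F] [DecidableEq F] [DecidableEq V]
    (x : V) (σ : V → F) (q : MvPolynomial V F) (p : Polynomial F) (k : F)
    (hq : MvPolynomial.degreeOf x q ≤ 2) (hp : p.degree ≤ 2)
    (hfalse : MvPolynomial.eval σ (dred x q) ≠ k)
    (hcheck : σ x * p.eval 1 + (1 - σ x) * p.eval 0 = k) :
    p ≠ uniAt x σ q ∧
      (Finset.univ.filter fun r : F =>
        p.eval r = MvPolynomial.eval (Function.update σ x r) q).card ≤ 2 := by
  have hdred : MvPolynomial.eval σ (MvPolynomial.X x * pev x 1 q + (1 - MvPolynomial.X x) * pev x 0 q)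
      = σ x * (uniAt x σ q).eval 1 + (1 - σ x) * (uniAt x σ q).eval 0 := by
    simp [pev_eval, uniAt_eval]
  rw [dred] at hfalse
  have hne : p ≠ uniAt x σ q := by
    intro h
    exact hfalse (by rw [hdred, ← h, hcheck])
  refine ⟨hne, ?_⟩
  set g := p - uniAt x σ q with hg
  have hg0 : g ≠ 0 := sub_ne_zero.mpr hne
  have hgd : g.natDegree ≤ 2 := by
    refine le_trans (Polynomial.natDegree_sub_le _ _) (max_le ?_ ?_)
    · exact Polynomial.natDegree_le_iff_degree_le.mpr hp
    · exact le_trans (uniAt_natDegree x σ q) hq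
  have hsub : (Finset.univ.filter fun r : F =>
      p.eval r = MvPolynomial.eval (Function.update σ x r) q) ⊆ g.roots.toFinset := by
    intro r hr
    rw [Finset.mem_filter] at hr
    rw [Multiset.mem_toFinset, Polynomial.mem_roots hg0]
    simp only [Polynomial.IsRoot, hg, Polynomial.eval_sub, sub_eq_zero]
    rw [hr.2, uniAt_eval]
  calc _ ≤ g.roots.toFinset.card := Finset.card_le_card hsub
    _ ≤ Multiset.card g.roots := Multiset.toFinset_card_le _
    _ ≤ g.natDegree := Polynomial.card_roots' g
    _ ≤ 2 := hgd
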